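/- For all m ≥ 3 and all i with 2 ≤ i ≤ m−1, the face numbers of the independence complex of G_m satisfy the recursion f_i(m) = 2·f_{i−1}(m−1) + f_i(m−1) + f_{i−2}(m−2) + f_{i−1}(m−2). -/

import Mathlib

/-- The vertex set of the graph `Gₘ`: `Sum.inl i` is the vertex `a_{i+1}` (for `0 ≤ i < m`),
`Sum.inr (Sum.inl i)` is `b_{i+1}`, and `Sum.inr (Sum.inr j)` is `c_{j+2}`. -/
abbrev GV (m : ℕ) := Fin m ⊕ Fin m ⊕ Fin (m - 1)

/-- The vertex `a_{i+1}` of `Gₘ`. -/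
def aV {m : ℕ} (i : Fin m) : GV m := Sum.inl i
/-- The vertex `b_{i+1}` of `Gₘ`. -/
def bV {m : ℕ} (i : Fin m) : GV m := Sum.inr (Sum.inl i)
/-- The vertex `c_{j+2}` of `Gₘ`. -/
def cV {m : ℕ} (j : Fin (m - 1)) : GV m := Sum.inr (Sum.inr j)

/-- Half of the adjacency relation of `Gₘ` (the full relation is its symmetrization):
the edges `a_i a_{i+1}`, `a_i b_i`, `b_i c_{i+1}`, `b_i c_i`, `c_i a_{i+1}` (1-based indices). -/
def adjHalf (m : ℕ) : GV m → GV m → Bool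
  | Sum.inl i, Sum.inl j => decide (i.val + 1 = j.val)
  | Sum.inl i, Sum.inr (Sum.inl j) => decide (i = j)
  | Sum.inl _, Sum.inr (Sum.inr _) => false
  | Sum.inr (Sum.inl _), Sum.inl _ => false
  | Sum.inr (Sum.inl _), Sum.inr (Sum.inl _) => false
  | Sum.inr (Sum.inl i), Sum.inr (Sum.inr j) => decide (i.val = j.val ∨ i.val = j.val + 1)
  | Sum.inr (Sum.inr j), Sum.inl i => decide (i.val = j.val + 2)
  | Sum.inr (Sum.inr _), Sum.inr (Sum.inl _) => false
  | Sum.inr (Sum.inr _), Sum.inr (Sum.inr _) => false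

/-- The graph `Gₘ` from the paper (with `3m - 1` vertices). -/
def Gm (m : ℕ) : SimpleGraph (GV m) where
  Adj u v := adjHalf m u v = true ∨ adjHalf m v u = true
  symm := ⟨fun _ _ h => Or.symm h⟩
  loopless := ⟨by
    rintro (i | i | j) h <;> simp [adjHalf] at h⟩

instance (m : ℕ) : DecidableRel (Gm m).Adj := fun u v =>
  inferInstanceAs (Decidable (adjHalf m u v = true ∨ adjHalf m v u = true))

/-- The number of independent sets of cardinality `k` of a graph `G`;
`nIndep G (i + 1)` is the face number `fᵢ` of the independence complex of `G`. -/
noncomputable def nIndep {V : Type*} (G : SimpleGraph V) (k : ℕ) : ℕ :=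
  Nat.card {A : Finset V // A.card = k ∧ ∀ u ∈ A, ∀ v ∈ A, ¬ G.Adj u v}



open Finset

def IndepF {V : Type*} (G : SimpleGraph V) (A : Finset V) : Prop :=
  ∀ u ∈ A, ∀ v ∈ A, ¬ G.Adj u v

instance {V : Type*} [DecidableEq V] (G : SimpleGraph V) [DecidableRel G.Adj] :
    DecidablePred (IndepF G) := fun A => by unfold IndepF; infer_instance

lemma nIndep_eq_filter {V : Type*} [Fintype V] [DecidableEq V] (G : SimpleGraph V)
    [DecidableRel G.Adj] (k : ℕ) :
    Nat.card {A : Finset V // A.card = k ∧ ∀ u ∈ A, ∀ v ∈ A, ¬ G.Adj u v}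
      = (univ.filter (fun A : Finset V => A.card = k ∧ IndepF G A)).card := by
  rw [Nat.card_eq_fintype_card, Fintype.card_subtype]
  congr 1
  unfold IndepF
  ext A
  simp

lemma count_eq {V W : Type*} [Fintype V] [Fintype W] [DecidableEq V] [DecidableEq W]
    (G : SimpleGraph V) (H : SimpleGraph W) [DecidableRel G.Adj] [DecidableRel H.Adj]
    (φ : W → V) (hφ : Function.Injective φ)
    (F : Finset V) (p : Finset V → Prop) [DecidablePred p]
    (hadj : ∀ x y, H.Adj x y ↔ G.Adj (φ x) (φ y))
    (hF : ∀ u ∈ F, ∀ v ∈ F, ¬ G.Adj u v)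
    (hFrange : ∀ f ∈ F, ∀ w, φ w ≠ f)
    (hFadj : ∀ w, ∀ f ∈ F, ¬ G.Adj (φ w) f)
    (hp : ∀ S : Finset V, IndepF G S →
      (p S ↔ F ⊆ S ∧ ∀ v ∈ S, v ∉ F → ∃ w, φ w = v))
    (s : ℕ) :
    (univ.filter (fun S : Finset V => S.card = s + F.card ∧ IndepF G S ∧ p S)).card
      = (univ.filter (fun T : Finset W => T.card = s ∧ IndepF H T)).card := by
  symm
  apply Finset.card_bij (fun T _ => T.image φ ∪ F)
  · -- membership
    intro T hT
    simp only [mem_filter, mem_univ, true_and] at hT ⊢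
    obtain ⟨hcard, hind⟩ := hT
    have hdisj : Disjoint (T.image φ) F := by
      rw [Finset.disjoint_right]
      intro f hf hmem
      obtain ⟨w, _, hw⟩ := Finset.mem_image.1 hmem
      exact hFrange f hf w hw
    have hIndep : IndepF G (T.image φ ∪ F) := by
      intro u hu v hv
      rcases Finset.mem_union.1 hu with hu | hu <;> rcases Finset.mem_union.1 hv with hv | hv
      · obtain ⟨x, hx, rfl⟩ := Finset.mem_image.1 hu
        obtain ⟨y, hy, rfl⟩ := Finset.mem_image.1 hv
        rw [← hadj]; exact hind x hx y hy
      · obtain ⟨x, hx, rfl⟩ := Finset.mem_image.1 hu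
        exact hFadj x v hv
      · obtain ⟨y, hy, rfl⟩ := Finset.mem_image.1 hv
        intro h
        exact hFadj y u hu h.symm
      · exact hF u hu v hv
    refine ⟨?_, hIndep, ?_⟩
    · rw [Finset.card_union_of_disjoint hdisj, Finset.card_image_of_injective _ hφ, hcard]
    · rw [hp _ hIndep]
      refine ⟨Finset.subset_union_right, ?_⟩
      intro v hv hvF
      rcases Finset.mem_union.1 hv with hv | hv
      · obtain ⟨w, _, hw⟩ := Finset.mem_image.1 hv
        exact ⟨w, hw⟩
      · exact absurd hv hvF
  · -- injective
    intro T1 h1 T2 h2 heq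
    have key : ∀ T : Finset W, (T.image φ ∪ F) \ F = T.image φ := by
      intro T
      apply Finset.union_sdiff_cancel_right
      rw [Finset.disjoint_right]
      intro f hf hmem
      obtain ⟨w, _, hw⟩ := Finset.mem_image.1 hmem
      exact hFrange f hf w hw
    have : T1.image φ = T2.image φ := by rw [← key T1, ← key T2, heq]
    exact Finset.image_injective hφ this
  · -- surjective
    intro S hS
    simp only [mem_filter, mem_univ, true_and] at hS
    obtain ⟨hcard, hind, hpS⟩ := hS
    rw [hp _ hind] at hpS
    obtain ⟨hFS, hrange⟩ := hpS
    have himg : ((S \ F).preimage φ hφ.injOn).image φ = S \ F := by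
      rw [Finset.image_preimage]
      apply Finset.filter_true_of_mem
      intro v hv
      obtain ⟨hvS, hvF⟩ := Finset.mem_sdiff.1 hv
      simpa using hrange v hvS hvF
    refine ⟨(S \ F).preimage φ hφ.injOn, ?_, ?_⟩
    · simp only [mem_filter, mem_univ, true_and]
      constructor
      · have h1 : (((S \ F).preimage φ hφ.injOn).image φ).card
            = ((S \ F).preimage φ hφ.injOn).card :=
          Finset.card_image_of_injective _ hφ
        rw [himg] at h1
        rw [← h1, Finset.card_sdiff_of_subset hFS, hcard]
        omega
      · intro x hx y hy
        rw [Finset.mem_preimage] at hx hy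
        rw [hadj]
        exact hind _ (Finset.mem_sdiff.1 hx).1 _ (Finset.mem_sdiff.1 hy).1
    · rw [himg, Finset.sdiff_union_of_subset hFS]


section Embeddings

variable (n : ℕ)

/-- helper adjacency lemmas -/
lemma adj_ab {m : ℕ} (x y : Fin m) (h : x.val = y.val) : (Gm m).Adj (aV x) (bV y) := by
  left; simp [Gm, adjHalf, aV, bV, Fin.ext_iff]; omega

lemma adj_aa {m : ℕ} (x y : Fin m) (h : x.val + 1 = y.val) : (Gm m).Adj (aV x) (aV y) := by
  left; simp [Gm, adjHalf, aV]; omega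

lemma adj_bc {m : ℕ} (x : Fin m) (y : Fin (m-1)) (h : x.val = y.val ∨ x.val = y.val + 1) :
    (Gm m).Adj (bV x) (cV y) := by
  left; simp [Gm, adjHalf, bV, cV]; omega

lemma adj_ca {m : ℕ} (y : Fin (m-1)) (x : Fin m) (h : x.val = y.val + 2) :
    (Gm m).Adj (cV y) (aV x) := by
  left; simp [Gm, adjHalf, cV, aV]; omega

/-- the standard embedding `GV (n+2) → GV (n+3)` -/
def φstd : GV (n+2) → GV (n+3) :=
  Sum.map Fin.castSucc (Sum.map Fin.castSucc Fin.castSucc)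

/-- the standard embedding `GV (n+1) → GV (n+3)` -/
def φstd2 : GV (n+1) → GV (n+3) :=
  Sum.map (Fin.castLE (by omega)) (Sum.map (Fin.castLE (by omega)) (Fin.castLE (by omega)))

/-- the twisted embedding `GV (n+2) → GV (n+3)` sending the last `b` to the last `a` -/
def φtw : GV (n+2) → GV (n+3)
  | Sum.inl x => Sum.inl x.castSucc
  | Sum.inr (Sum.inl x) =>
      if x.val = n + 1 then Sum.inl (Fin.last (n+2)) else Sum.inr (Sum.inl x.castSucc)
  | Sum.inr (Sum.inr x) => Sum.inr (Sum.inr x.castSucc)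

lemma φstd_inj : Function.Injective (φstd n) := by
  rintro (x|x|x) (y|y|y) h <;> simp [φstd, Fin.ext_iff] at h <;> simp [Fin.ext_iff, h]

lemma φstd2_inj : Function.Injective (φstd2 n) := by
  rintro (x|x|x) (y|y|y) h <;> simp [φstd2, Fin.ext_iff] at h <;> simp [Fin.ext_iff, h]

lemma φtw_inj : Function.Injective (φtw n) := by
  rintro (x|x|x) (y|y|y) h <;> simp [φtw, Fin.ext_iff] at h <;>
    first
    | (split_ifs at h <;> simp_all [Fin.ext_iff] <;> omega)
    | simp [Fin.ext_iff, h]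

lemma φstd_adj (x y : GV (n+2)) :
    (Gm (n+2)).Adj x y ↔ (Gm (n+3)).Adj (φstd n x) (φstd n y) := by
  rcases x with x|x|x <;> rcases y with y|y|y <;>
    simp [Gm, adjHalf, φstd, Fin.ext_iff]

lemma φstd2_adj (x y : GV (n+1)) :
    (Gm (n+1)).Adj x y ↔ (Gm (n+3)).Adj (φstd2 n x) (φstd2 n y) := by
  rcases x with x|x|x <;> rcases y with y|y|y <;>
    simp [Gm, adjHalf, φstd2, Fin.ext_iff]

lemma φtw_adj (x y : GV (n+2)) :
    (Gm (n+2)).Adj x y ↔ (Gm (n+3)).Adj (φtw n x) (φtw n y) := by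
  rcases x with x|x|x <;> rcases y with y|y|y <;>
    simp only [Gm, adjHalf, φtw, Fin.ext_iff] <;>
    (try split_ifs) <;>
    simp_all [Gm, adjHalf, Fin.ext_iff, Fin.last] <;>
    omega

end Embeddings

section Cases

variable (n : ℕ)

/-- special vertices of `G_{n+3}` -/
def vA : GV (n+3) := aV (Fin.last (n+2))
def vB : GV (n+3) := bV (Fin.last (n+2))
def vB' : GV (n+3) := bV ⟨n+1, by omega⟩
def vC : GV (n+3) := cV (Fin.last (n+1))
def vA' : GV (n+3) := aV ⟨n+1, by omega⟩
def vC' : GV (n+3) := cV ⟨n, by omega⟩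

lemma φstd_ne (w : GV (n+2)) :
    φstd n w ≠ vA n ∧ φstd n w ≠ vB n ∧ φstd n w ≠ vC n := by
  rcases w with x|x|x <;>
    simp [φstd, vA, vB, vC, aV, bV, cV, Fin.ext_iff] <;> omega

lemma φtw_ne (w : GV (n+2)) :
    φtw n w ≠ vB n ∧ φtw n w ≠ vB' n ∧ φtw n w ≠ vC n := by
  rcases w with x|x|x <;>
    simp only [φtw, vB, vB', vC, aV, bV, cV, Fin.ext_iff] <;>
    (try split_ifs) <;> simp [Fin.ext_iff] <;> omega

lemma φstd2_ne (w : GV (n+1)) :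
    φstd2 n w ≠ vA n ∧ φstd2 n w ≠ vB n ∧ φstd2 n w ≠ vC n ∧
      φstd2 n w ≠ vA' n ∧ φstd2 n w ≠ vB' n ∧ φstd2 n w ≠ vC' n := by
  rcases w with x|x|x <;>
    simp [φstd2, vA, vB, vC, vA', vB', vC', aV, bV, cV, Fin.ext_iff] <;> omega

lemma φstd_range (v : GV (n+3)) (h1 : v ≠ vA n) (h2 : v ≠ vB n) (h3 : v ≠ vC n) :
    ∃ w, φstd n w = v := by
  rcases v with x|x|x
  · simp only [vA, aV, Fin.ext_iff, Fin.last, ne_eq, Sum.inl.injEq] at h1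
    have hx : x.val < n + 2 := by have := x.isLt; omega
    exact ⟨Sum.inl ⟨x.val, hx⟩, by simp [φstd, Fin.ext_iff]⟩
  · simp only [vB, bV, Fin.ext_iff, Fin.last, ne_eq, Sum.inr.injEq, Sum.inl.injEq] at h2
    have hx : x.val < n + 2 := by have := x.isLt; omega
    exact ⟨Sum.inr (Sum.inl ⟨x.val, hx⟩), by simp [φstd, Fin.ext_iff]⟩
  · simp only [vC, cV, Fin.ext_iff, Fin.last, ne_eq, Sum.inr.injEq] at h3
    have hx : x.val < n + 1 := by have := x.isLt; omega
    exact ⟨Sum.inr (Sum.inr ⟨x.val, hx⟩), by simp [φstd, Fin.ext_iff]⟩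

lemma φtw_range (v : GV (n+3)) (h1 : v ≠ vB n) (h2 : v ≠ vB' n) (h3 : v ≠ vC n) :
    ∃ w, φtw n w = v := by
  rcases v with x|x|x
  · by_cases hx : x.val = n + 2
    · refine ⟨Sum.inr (Sum.inl (Fin.last (n+1))), ?_⟩
      simp [φtw, Fin.ext_iff, Fin.last, hx]
    · have hx' : x.val < n + 2 := by have := x.isLt; omega
      exact ⟨Sum.inl ⟨x.val, hx'⟩, by simp [φtw, Fin.ext_iff]⟩
  · simp only [vB, vB', bV, Fin.ext_iff, Fin.last, ne_eq, Sum.inr.injEq, Sum.inl.injEq] at h1 h2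
    have hx : x.val < n + 1 := by have := x.isLt; omega
    refine ⟨Sum.inr (Sum.inl ⟨x.val, by omega⟩), ?_⟩
    simp [φtw, Fin.ext_iff]
    omega
  · simp only [vC, cV, Fin.ext_iff, Fin.last, ne_eq, Sum.inr.injEq] at h3
    have hx : x.val < n + 1 := by have := x.isLt; omega
    exact ⟨Sum.inr (Sum.inr ⟨x.val, hx⟩), by simp [φtw, Fin.ext_iff]⟩

lemma φstd2_range (v : GV (n+3)) (h1 : v ≠ vA n) (h2 : v ≠ vB n) (h3 : v ≠ vC n)
    (h4 : v ≠ vA' n) (h5 : v ≠ vB' n) (h6 : v ≠ vC' n) :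
    ∃ w, φstd2 n w = v := by
  rcases v with x|x|x
  · simp only [vA, vA', aV, Fin.ext_iff, Fin.last, ne_eq, Sum.inl.injEq] at h1 h4
    have hx : x.val < n + 1 := by have := x.isLt; omega
    exact ⟨Sum.inl ⟨x.val, hx⟩, by simp [φstd2, Fin.ext_iff]⟩
  · simp only [vB, vB', bV, Fin.ext_iff, Fin.last, ne_eq, Sum.inr.injEq, Sum.inl.injEq] at h2 h5
    have hx : x.val < n + 1 := by have := x.isLt; omega
    exact ⟨Sum.inr (Sum.inl ⟨x.val, hx⟩), by simp [φstd2, Fin.ext_iff]⟩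
  · simp only [vC, vC', cV, Fin.ext_iff, Fin.last, ne_eq, Sum.inr.injEq] at h3 h6
    have hx : x.val < n := by have := x.isLt; omega
    exact ⟨Sum.inr (Sum.inr ⟨x.val, hx⟩), by simp [φstd2, Fin.ext_iff]⟩

end Cases

section CaseLemmas

variable (n : ℕ)

lemma notadj_tw_C (w : GV (n+2)) : ¬ (Gm (n+3)).Adj (φtw n w) (vC n) := by
  rcases w with x|x|x <;>
    simp only [Gm, adjHalf, φtw, vC, cV, Fin.ext_iff] <;>
    (try split_ifs) <;> simp [adjHalf, Fin.ext_iff, Fin.last] <;> omega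

lemma notadj_std_B (w : GV (n+2)) : ¬ (Gm (n+3)).Adj (φstd n w) (vB n) := by
  rcases w with x|x|x <;>
    simp [Gm, adjHalf, φstd, vB, bV, Fin.ext_iff, Fin.last] <;> omega

lemma notadj_std2_A (w : GV (n+1)) : ¬ (Gm (n+3)).Adj (φstd2 n w) (vA n) := by
  rcases w with x|x|x <;>
    simp [Gm, adjHalf, φstd2, vA, aV, Fin.ext_iff, Fin.last] <;> omega

lemma notadj_std2_B' (w : GV (n+1)) : ¬ (Gm (n+3)).Adj (φstd2 n w) (vB' n) := by
  rcases w with x|x|x <;>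
    simp [Gm, adjHalf, φstd2, vB', bV, Fin.ext_iff, Fin.last] <;> omega

lemma notadj_AB' : ¬ (Gm (n+3)).Adj (vA n) (vB' n) := by
  simp [Gm, adjHalf, vA, vB', aV, bV, Fin.ext_iff, Fin.last]

lemma adj_B'C : (Gm (n+3)).Adj (vB' n) (vC n) :=
  adj_bc _ _ (Or.inl rfl)

lemma adj_BC : (Gm (n+3)).Adj (vB n) (vC n) :=
  adj_bc _ _ (Or.inr rfl)

lemma adj_AB : (Gm (n+3)).Adj (vA n) (vB n) :=
  adj_ab _ _ rfl

lemma adj_A'A : (Gm (n+3)).Adj (vA' n) (vA n) :=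
  adj_aa _ _ rfl

lemma adj_C'A : (Gm (n+3)).Adj (vC' n) (vA n) :=
  adj_ca _ _ rfl

lemma case1 (j : ℕ) :
    (univ.filter (fun S : Finset (GV (n+3)) =>
        S.card = j + 3 ∧ IndepF (Gm (n+3)) S ∧ vC n ∈ S)).card
      = (univ.filter (fun T : Finset (GV (n+2)) =>
          T.card = j + 2 ∧ IndepF (Gm (n+2)) T)).card := by
  have h := count_eq (Gm (n+3)) (Gm (n+2)) (φtw n) (φtw_inj n) {vC n}
      (fun S => vC n ∈ S) (φtw_adj n)
      (by intro u hu v hv; simp only [Finset.mem_singleton] at hu hv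
          subst hu; subst hv; exact (Gm _).irrefl)
      (by intro f hf w; simp only [Finset.mem_singleton] at hf; subst hf
          exact (φtw_ne n w).2.2)
      (by intro w f hf; simp only [Finset.mem_singleton] at hf; subst hf
          exact notadj_tw_C n w)
      ?_ (j + 2)
  · simpa using h
  · intro S hS
    constructor
    · intro hc
      refine ⟨by simpa using hc, ?_⟩
      intro v hv hvne
      simp only [Finset.mem_singleton] at hvne
      refine φtw_range n v ?_ ?_ hvne
      · rintro rfl; exact hS _ hv _ hc (adj_BC n)
      · rintro rfl; exact hS _ hv _ hc (adj_B'C n)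
    · rintro ⟨h, -⟩
      exact h (Finset.mem_singleton_self _)

lemma case2 (j : ℕ) :
    (univ.filter (fun S : Finset (GV (n+3)) =>
        S.card = j + 3 ∧ IndepF (Gm (n+3)) S ∧ (vC n ∉ S ∧ vB n ∈ S))).card
      = (univ.filter (fun T : Finset (GV (n+2)) =>
          T.card = j + 2 ∧ IndepF (Gm (n+2)) T)).card := by
  have h := count_eq (Gm (n+3)) (Gm (n+2)) (φstd n) (φstd_inj n) {vB n}
      (fun S => vC n ∉ S ∧ vB n ∈ S) (φstd_adj n)
      (by intro u hu v hv; simp only [Finset.mem_singleton] at hu hv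
          subst hu; subst hv; exact (Gm _).irrefl)
      (by intro f hf w; simp only [Finset.mem_singleton] at hf; subst hf
          exact (φstd_ne n w).2.1)
      (by intro w f hf; simp only [Finset.mem_singleton] at hf; subst hf
          exact notadj_std_B n w)
      ?_ (j + 2)
  · simpa using h
  · intro S hS
    constructor
    · rintro ⟨hcn, hb⟩
      refine ⟨by simpa using hb, ?_⟩
      intro v hv hvne
      simp only [Finset.mem_singleton] at hvne
      refine φstd_range n v ?_ hvne ?_
      · rintro rfl; exact hS _ hv _ hb (adj_AB n)
      · rintro rfl; exact hcn hv
    · rintro ⟨h, hr⟩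
      have hb : vB n ∈ S := h (Finset.mem_singleton_self _)
      refine ⟨?_, hb⟩
      intro hc
      have hne : vC n ∉ ({vB n} : Finset (GV (n+3))) := by simp [vB, vC, bV, cV]
      obtain ⟨w, hw⟩ := hr _ hc hne
      exact (φstd_ne n w).2.2 hw

lemma case3 (j : ℕ) :
    (univ.filter (fun S : Finset (GV (n+3)) =>
        S.card = j + 3 ∧ IndepF (Gm (n+3)) S ∧ (vC n ∉ S ∧ vB n ∉ S ∧ vA n ∉ S))).card
      = (univ.filter (fun T : Finset (GV (n+2)) =>
          T.card = j + 3 ∧ IndepF (Gm (n+2)) T)).card := by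
  have h := count_eq (Gm (n+3)) (Gm (n+2)) (φstd n) (φstd_inj n) ∅
      (fun S => vC n ∉ S ∧ vB n ∉ S ∧ vA n ∉ S) (φstd_adj n)
      (by simp) (by simp) (by simp)
      ?_ (j + 3)
  · simpa using h
  · intro S hS
    constructor
    · rintro ⟨hc, hb, ha⟩
      refine ⟨by simp, ?_⟩
      intro v hv _
      refine φstd_range n v ?_ ?_ ?_ <;> rintro rfl
      · exact ha hv
      · exact hb hv
      · exact hc hv
    · rintro ⟨-, hr⟩
      refine ⟨?_, ?_, ?_⟩ <;> intro hmem <;>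
        obtain ⟨w, hw⟩ := hr _ hmem (Finset.notMem_empty _)
      · exact (φstd_ne n w).2.2 hw
      · exact (φstd_ne n w).2.1 hw
      · exact (φstd_ne n w).1 hw

lemma case4a (j : ℕ) :
    (univ.filter (fun S : Finset (GV (n+3)) =>
        S.card = j + 3 ∧ IndepF (Gm (n+3)) S ∧
          (vC n ∉ S ∧ vB n ∉ S ∧ vA n ∈ S ∧ vB' n ∈ S))).card
      = (univ.filter (fun T : Finset (GV (n+1)) =>
          T.card = j + 1 ∧ IndepF (Gm (n+1)) T)).card := by
  have hAB' : vA n ≠ vB' n := by simp [vA, vB', aV, bV]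
  have h := count_eq (Gm (n+3)) (Gm (n+1)) (φstd2 n) (φstd2_inj n) {vA n, vB' n}
      (fun S => vC n ∉ S ∧ vB n ∉ S ∧ vA n ∈ S ∧ vB' n ∈ S) (φstd2_adj n)
      (by intro u hu v hv
          simp only [Finset.mem_insert, Finset.mem_singleton] at hu hv
          rcases hu with rfl | rfl <;> rcases hv with rfl | rfl
          · exact (Gm _).irrefl
          · exact notadj_AB' n
          · exact fun hadj => notadj_AB' n hadj.symm
          · exact (Gm _).irrefl)
      (by intro f hf w
          simp only [Finset.mem_insert, Finset.mem_singleton] at hf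
          rcases hf with rfl | rfl
          · exact (φstd2_ne n w).1
          · exact (φstd2_ne n w).2.2.2.2.1)
      (by intro w f hf
          simp only [Finset.mem_insert, Finset.mem_singleton] at hf
          rcases hf with rfl | rfl
          · exact notadj_std2_A n w
          · exact notadj_std2_B' n w)
      ?_ (j + 1)
  · rw [show ({vA n, vB' n} : Finset (GV (n+3))).card = 2 from Finset.card_pair hAB'] at h
    exact h
  · intro S hS
    constructor
    · rintro ⟨hc, hb, ha, hb'⟩
      refine ⟨by simp [Finset.insert_subset_iff, ha, hb'], ?_⟩
      intro v hv hvF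
      simp only [Finset.mem_insert, Finset.mem_singleton, not_or] at hvF
      refine φstd2_range n v hvF.1 ?_ ?_ ?_ hvF.2 ?_ <;> rintro rfl
      · exact hb hv
      · exact hc hv
      · exact hS _ hv _ ha (adj_A'A n)
      · exact hS _ hv _ ha (adj_C'A n)
    · rintro ⟨hsub, hr⟩
      have ha : vA n ∈ S := hsub (Finset.mem_insert_self _ _)
      have hb' : vB' n ∈ S := hsub (by simp)
      refine ⟨?_, ?_, ha, hb'⟩ <;> intro hmem
      · have : vC n ∉ ({vA n, vB' n} : Finset (GV (n+3))) := by
          simp [vA, vB', vC, aV, bV, cV]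
        obtain ⟨w, hw⟩ := hr _ hmem this
        exact (φstd2_ne n w).2.2.1 hw
      · have : vB n ∉ ({vA n, vB' n} : Finset (GV (n+3))) := by
          simp [vA, vB', vB, aV, bV, Fin.ext_iff, Fin.last]
        obtain ⟨w, hw⟩ := hr _ hmem this
        exact (φstd2_ne n w).2.1 hw

lemma case4b (j : ℕ) :
    (univ.filter (fun S : Finset (GV (n+3)) =>
        S.card = j + 3 ∧ IndepF (Gm (n+3)) S ∧
          (vC n ∉ S ∧ vB n ∉ S ∧ vA n ∈ S ∧ vB' n ∉ S))).card
      = (univ.filter (fun T : Finset (GV (n+1)) =>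
          T.card = j + 2 ∧ IndepF (Gm (n+1)) T)).card := by
  have h := count_eq (Gm (n+3)) (Gm (n+1)) (φstd2 n) (φstd2_inj n) {vA n}
      (fun S => vC n ∉ S ∧ vB n ∉ S ∧ vA n ∈ S ∧ vB' n ∉ S) (φstd2_adj n)
      (by intro u hu v hv; simp only [Finset.mem_singleton] at hu hv
          subst hu; subst hv; exact (Gm _).irrefl)
      (by intro f hf w; simp only [Finset.mem_singleton] at hf; subst hf
          exact (φstd2_ne n w).1)
      (by intro w f hf; simp only [Finset.mem_singleton] at hf; subst hf
          exact notadj_std2_A n w)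
      ?_ (j + 2)
  · simpa using h
  · intro S hS
    constructor
    · rintro ⟨hc, hb, ha, hb'⟩
      refine ⟨by simpa using ha, ?_⟩
      intro v hv hvF
      simp only [Finset.mem_singleton] at hvF
      refine φstd2_range n v hvF ?_ ?_ ?_ ?_ ?_ <;> rintro rfl
      · exact hb hv
      · exact hc hv
      · exact hS _ hv _ ha (adj_A'A n)
      · exact hb' hv
      · exact hS _ hv _ ha (adj_C'A n)
    · rintro ⟨hsub, hr⟩
      have ha : vA n ∈ S := hsub (Finset.mem_singleton_self _)
      refine ⟨?_, ?_, ha, ?_⟩ <;> intro hmem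
      · have : vC n ∉ ({vA n} : Finset (GV (n+3))) := by simp [vA, vC, aV, cV]
        obtain ⟨w, hw⟩ := hr _ hmem this
        exact (φstd2_ne n w).2.2.1 hw
      · have : vB n ∉ ({vA n} : Finset (GV (n+3))) := by simp [vA, vB, aV, bV]
        obtain ⟨w, hw⟩ := hr _ hmem this
        exact (φstd2_ne n w).2.1 hw
      · have : vB' n ∉ ({vA n} : Finset (GV (n+3))) := by simp [vA, vB', aV, bV]
        obtain ⟨w, hw⟩ := hr _ hmem this
        exact (φstd2_ne n w).2.2.2.2.1 hw

end CaseLemmas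

lemma nIndep_eq {V : Type*} [Fintype V] [DecidableEq V] (G : SimpleGraph V)
    [DecidableRel G.Adj] (k : ℕ) :
    nIndep G k = (univ.filter (fun A : Finset V => A.card = k ∧ IndepF G A)).card := by
  unfold nIndep
  exact nIndep_eq_filter G k

lemma split_card {α : Type*} [Fintype α] (P q : α → Prop) [DecidablePred P] [DecidablePred q] :
    (univ.filter P).card
      = (univ.filter (fun a => P a ∧ q a)).card + (univ.filter (fun a => P a ∧ ¬ q a)).card := by
  rw [← Finset.filter_filter, ← Finset.filter_filter,
    Finset.card_filter_add_card_filter_not]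

lemma card_filter_congr {α : Type*} [Fintype α] (P Q : α → Prop)
    [DecidablePred P] [DecidablePred Q] (h : ∀ a, P a ↔ Q a) :
    (univ.filter P).card = (univ.filter Q).card := by
  congr 1
  ext a
  simp [h a]

/-- The recursion `fᵢ(m) = 2f_{i−1}(m−1) + fᵢ(m−1) + f_{i−2}(m−2) + f_{i−1}(m−2)`
for the face numbers of the independence complex of `Gₘ` (`fᵢ(k) = nIndep (Gm k) (i+1)`),
valid for `3 ≤ m` and `2 ≤ i ≤ m − 1`. -/
theorem Gm_face_number_recursion (m i : ℕ) (hm : 3 ≤ m) (hi : 2 ≤ i) (him : i ≤ m - 1) :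
    nIndep (Gm m) (i + 1) =
      2 * nIndep (Gm (m - 1)) i + nIndep (Gm (m - 1)) (i + 1) +
        nIndep (Gm (m - 2)) (i - 1) + nIndep (Gm (m - 2)) i := by
  obtain ⟨n, rfl⟩ : ∃ n, m = n + 3 := ⟨m - 3, by omega⟩
  obtain ⟨j, rfl⟩ : ∃ j, i = j + 2 := ⟨i - 2, by omega⟩
  show nIndep (Gm (n+3)) (j+3) =
      2 * nIndep (Gm (n+2)) (j+2) + nIndep (Gm (n+2)) (j+3) +
        nIndep (Gm (n+1)) (j+1) + nIndep (Gm (n+1)) (j+2)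
  rw [nIndep_eq, nIndep_eq, nIndep_eq, nIndep_eq, nIndep_eq]
  set P0 : Finset (GV (n+3)) → Prop := fun S => S.card = j + 3 ∧ IndepF (Gm (n+3)) S with hP0
  have e1 := split_card P0 (fun S => vC n ∈ S)
  have e2 := split_card (fun S => P0 S ∧ ¬ vC n ∈ S) (fun S => vB n ∈ S)
  have e3 := split_card (fun S => (P0 S ∧ ¬ vC n ∈ S) ∧ ¬ vB n ∈ S) (fun S => vA n ∈ S)
  have e4 := split_card (fun S => ((P0 S ∧ ¬ vC n ∈ S) ∧ ¬ vB n ∈ S) ∧ vA n ∈ S)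
    (fun S => vB' n ∈ S)
  have C1 : (univ.filter (fun S => P0 S ∧ vC n ∈ S)).card
      = (univ.filter (fun T : Finset (GV (n+2)) =>
          T.card = j + 2 ∧ IndepF (Gm (n+2)) T)).card :=
    (card_filter_congr _ _ (fun S => by simp only [hP0, and_assoc])).trans (case1 n j)
  have C2 : (univ.filter (fun S => (P0 S ∧ ¬ vC n ∈ S) ∧ vB n ∈ S)).card
      = (univ.filter (fun T : Finset (GV (n+2)) =>
          T.card = j + 2 ∧ IndepF (Gm (n+2)) T)).card :=
    (card_filter_congr _ _ (fun S => by simp only [hP0, and_assoc])).trans (case2 n j)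
  have C3 : (univ.filter (fun S => ((P0 S ∧ ¬ vC n ∈ S) ∧ ¬ vB n ∈ S) ∧ ¬ vA n ∈ S)).card
      = (univ.filter (fun T : Finset (GV (n+2)) =>
          T.card = j + 3 ∧ IndepF (Gm (n+2)) T)).card :=
    (card_filter_congr _ _ (fun S => by simp only [hP0, and_assoc])).trans (case3 n j)
  have C4a : (univ.filter (fun S => (((P0 S ∧ ¬ vC n ∈ S) ∧ ¬ vB n ∈ S) ∧ vA n ∈ S)
        ∧ vB' n ∈ S)).card
      = (univ.filter (fun T : Finset (GV (n+1)) =>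
          T.card = j + 1 ∧ IndepF (Gm (n+1)) T)).card :=
    (card_filter_congr _ _ (fun S => by simp only [hP0, and_assoc])).trans (case4a n j)
  have C4b : (univ.filter (fun S => (((P0 S ∧ ¬ vC n ∈ S) ∧ ¬ vB n ∈ S) ∧ vA n ∈ S)
        ∧ ¬ vB' n ∈ S)).card
      = (univ.filter (fun T : Finset (GV (n+1)) =>
          T.card = j + 2 ∧ IndepF (Gm (n+1)) T)).card :=
    (card_filter_congr _ _ (fun S => by simp only [hP0, and_assoc])).trans (case4b n j)
  rw [e1, e2, e3, e4, C1, C2, C3, C4a, C4b]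
  ring
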